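/- Let n be a positive integer divisible by 3. Then the subgroup of GL(3,ℂ) generated by L_n and Z₁ (this is the group X(n)) has order 3·n². -/

import Mathlib

/-!
The matrices `diag(ν^a, ν^b, ν^(-a-b))`, `ν = exp(2πi/n)`, form a subgroup `D ≅ (ℤ/n)²`
containing `L_n`. Conjugation by `Z₁` permutes diagonal entries cyclically, so it normalises
`D`, and for `n = 3t` we have `Z₁³ = exp(2πi/3) • 1 = diag(ν^t, ν^t, ν^t) ∈ D`. Hence every
element of `X(n)` is `d * Z₁^k` with `d ∈ D` and `k < 3`, uniquely because `Z₁` and `Z₁²` are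
not diagonal: `3n²` elements.
-/
open Matrix

/-- The matrix `L_n = diag(1, ν, ν⁻¹)` with `ν = exp(2πi/n)`. -/
noncomputable def Lmatrix (n : ℕ) : Matrix (Fin 3) (Fin 3) ℂ :=
  Matrix.diagonal ![1, Complex.exp (2 * (Real.pi : ℂ) * Complex.I / (n : ℂ)),
    (Complex.exp (2 * (Real.pi : ℂ) * Complex.I / (n : ℂ)))⁻¹]

/-- The matrix `Z_m`, with `(Z_m)₀₂ = μ = exp(2πi/3^m)`, `(Z_m)₁₀ = (Z_m)₂₁ = 1`
and all other entries `0`. -/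
noncomputable def Zmatrix (m : ℕ) : Matrix (Fin 3) (Fin 3) ℂ :=
  !![0, 0, Complex.exp (2 * (Real.pi : ℂ) * Complex.I / ((3 : ℂ) ^ m));
     1, 0, 0;
     0, 1, 0]

section DiagonalAddChar

variable {ι A R : Type*} [Fintype ι] [DecidableEq ι] [AddGroup A] [Semiring R]

noncomputable def diagonalAddChar (ψ : AddChar A R) : AddChar (ι → A) (GL ι R) where
  toFun x := ⟨diagonal (ψ ∘ x), diagonal (ψ ∘ (-x)),
    by rw [diagonal_mul_diagonal, ← diagonal_one]; congr; ext; simp [← ψ.map_add_eq_mul],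
    by rw [diagonal_mul_diagonal, ← diagonal_one]; congr; ext; simp [← ψ.map_add_eq_mul]⟩
  map_zero_eq_one' := by ext : 1; simp
  map_add_eq_mul' x y := by ext : 1; simp [diagonal_mul_diagonal, AddChar.map_add_eq_mul ψ]

@[simp]
lemma diagonalAddChar_val (ψ : AddChar A R) (x : ι → A) :
    (diagonalAddChar ψ x : Matrix ι ι R) = diagonal (ψ ∘ x) := rfl

lemma diagonalAddChar_injective {ψ : AddChar A R} (hψ : Function.Injective ψ) :
    Function.Injective (diagonalAddChar (ι := ι) ψ) := fun x y h ↦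
  funext fun i ↦ hψ <| by
    simpa using congrArg (fun g : GL ι R ↦ (g : Matrix ι ι R) i i) h

end DiagonalAddChar

lemma Zmatrix_mul_diagonal (m : ℕ) (d : Fin 3 → ℂ) :
    Zmatrix m * diagonal d = diagonal ![d 2, d 0, d 1] * Zmatrix m := by
  ext i j
  fin_cases i <;> fin_cases j <;> simp [Zmatrix, mul_comm]

lemma Zmatrix_pow_three (m : ℕ) :
    Zmatrix m ^ 3 =
      Complex.exp (2 * Real.pi * Complex.I / 3 ^ m) • (1 : Matrix (Fin 3) (Fin 3) ℂ) := by
  ext i j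
  fin_cases i <;> fin_cases j <;> simp [Zmatrix, pow_succ, Matrix.mul_apply, Fin.sum_univ_three]

lemma Zmatrix_pow_ne_diagonal (m : ℕ) {j : ℕ} (hj₀ : 0 < j) (hj₃ : j < 3) (d : Fin 3 → ℂ) :
    Zmatrix m ^ j ≠ diagonal d := by
  intro h
  have := congrFun₂ h ⟨j, hj₃⟩ 0
  interval_cases j <;> simp [Zmatrix, pow_succ, Matrix.mul_apply, Fin.sum_univ_three] at this

section TraceZero

variable {A : Type*} [AddCommGroup A]

variable (A) in
def traceZeroEmbedding : A × A →+ (Fin 3 → A) where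
  toFun p := ![p.1, p.2, -p.1 - p.2]
  map_zero' := by ext i; fin_cases i <;> simp
  map_add' p q := by ext i; fin_cases i <;> simp; abel

def cycleCoords (p : A × A) : A × A := (-p.1 - p.2, p.1)

lemma traceZeroEmbedding_cycleCoords (p : A × A) :
    traceZeroEmbedding A (cycleCoords p) =
      ![traceZeroEmbedding A p 2, traceZeroEmbedding A p 0, traceZeroEmbedding A p 1] := by
  ext i; fin_cases i <;> simp [traceZeroEmbedding, cycleCoords]

end TraceZero

section DiagChar

variable {n : ℕ} [NeZero n]

variable (n) in
/-- `diag(ν^a, ν^b, ν^(-a-b))` with `ν = exp(2πi/n)`. -/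
noncomputable def diagChar : AddChar (ZMod n × ZMod n) (GL (Fin 3) ℂ) :=
  (diagonalAddChar ZMod.stdAddChar).compAddMonoidHom (traceZeroEmbedding (ZMod n))

lemma diagChar_val (p : ZMod n × ZMod n) :
    (diagChar n p : Matrix (Fin 3) (Fin 3) ℂ) =
      diagonal (ZMod.stdAddChar ∘ traceZeroEmbedding (ZMod n) p) :=
  rfl

lemma diagChar_injective : Function.Injective (diagChar n) := by
  intro p q h
  have := congrFun (diagonalAddChar_injective ZMod.injective_stdAddChar h)
  exact Prod.ext (this 0) (this 1)

lemma diagChar_zero_one : (diagChar n (0, 1) : Matrix (Fin 3) (Fin 3) ℂ) = Lmatrix n := by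
  have h := ZMod.stdAddChar_coe (N := n) 1
  push_cast at h
  rw [diagChar_val, Lmatrix]
  congr 1; ext i
  fin_cases i <;> simp [traceZeroEmbedding, AddChar.map_neg_eq_inv, h]

lemma Zmatrix_mul_diagChar (m : ℕ) (p : ZMod n × ZMod n) :
    Zmatrix m * diagChar n p = diagChar n (cycleCoords p) * Zmatrix m := by
  rw [diagChar_val, diagChar_val, Zmatrix_mul_diagonal, traceZeroEmbedding_cycleCoords]
  congr 2; ext i; fin_cases i <;> rfl

lemma Zmatrix_one_pow_three {t : ℕ} (ht : n = 3 * t) :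
    Zmatrix 1 ^ 3 = diagChar n (t, t) := by
  subst ht
  have ht : (t : ℂ) ≠ 0 := Nat.cast_ne_zero.mpr (right_ne_zero_of_mul (NeZero.ne (3 * t)))
  have hω : ZMod.stdAddChar (t : ZMod (3 * t)) = Complex.exp (2 * Real.pi * Complex.I / 3) := by
    rw [← Int.cast_natCast, ZMod.stdAddChar_coe]; congr 1; push_cast; field_simp
  have h3 : -(t : ZMod (3 * t)) - t = t := by
    have h := ZMod.natCast_self (3 * t)
    push_cast at h
    linear_combination -h
  rw [Zmatrix_pow_three, diagChar_val, smul_one_eq_diagonal]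
  congr 1; ext i; fin_cases i <;> simp [traceZeroEmbedding, h3, hω]

end DiagChar

section NormalForm

variable {n m : ℕ} [NeZero n] {L Z : GL (Fin 3) ℂ}

lemma isOfFinOrder_diagChar (p : ZMod n × ZMod n) : IsOfFinOrder (diagChar n p) :=
  isOfFinOrder_iff_pow_eq_one.mpr ⟨Nat.card (ZMod n × ZMod n), Nat.card_pos, by
    rw [← AddChar.map_nsmul_eq_pow, card_nsmul_eq_zero', AddChar.map_zero_eq_one]⟩

lemma eq_diagChar_zero_one (hL : (L : Matrix (Fin 3) (Fin 3) ℂ) = Lmatrix n) :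
    L = diagChar n (0, 1) :=
  Units.ext (hL.trans diagChar_zero_one.symm)

lemma pow_three_eq_diagChar (hZ : (Z : Matrix (Fin 3) (Fin 3) ℂ) = Zmatrix 1) {t : ℕ}
    (ht : n = 3 * t) : Z ^ 3 = diagChar n (t, t) :=
  Units.ext (by rw [Units.val_pow_eq_pow_val, hZ, Zmatrix_one_pow_three ht])

lemma mul_diagChar (hZ : (Z : Matrix (Fin 3) (Fin 3) ℂ) = Zmatrix m) (p : ZMod n × ZMod n) :
    Z * diagChar n p = diagChar n (cycleCoords p) * Z :=
  Units.ext (by simp only [Units.val_mul, hZ, Zmatrix_mul_diagChar])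

lemma pow_mul_diagChar (hZ : (Z : Matrix (Fin 3) (Fin 3) ℂ) = Zmatrix m) (k : ℕ)
    (p : ZMod n × ZMod n) : Z ^ k * diagChar n p = diagChar n (cycleCoords^[k] p) * Z ^ k := by
  induction k generalizing p with
  | zero => simp
  | succ k ih =>
    rw [pow_succ, mul_assoc, mul_diagChar hZ, ← mul_assoc, ih, mul_assoc,
      Function.iterate_succ_apply]

variable (n Z) in
noncomputable def normalForm (x : (ZMod n × ZMod n) × Fin 3) : GL (Fin 3) ℂ :=
  diagChar n x.1 * Z ^ (x.2 : ℕ)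

lemma normalForm_injective (hZ : (Z : Matrix (Fin 3) (Fin 3) ℂ) = Zmatrix m) :
    Function.Injective (normalForm n Z) := by
  rintro ⟨p, k⟩ ⟨q, l⟩ h
  wlog hkl : k ≤ l generalizing p q k l
  · exact (this q l p k h.symm (le_of_not_ge hkl)).symm
  have hpow : diagChar n (p - q) = Z ^ ((l : ℕ) - k) := by
    rw [sub_eq_neg_add, AddChar.map_add_eq_mul, AddChar.map_neg_eq_inv, inv_mul_eq_iff_eq_mul,
      pow_sub Z hkl, ← mul_assoc, eq_mul_inv_iff_mul_eq]
    exact h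
  have hlk : (l : ℕ) - k = 0 := by
    by_contra hne
    refine Zmatrix_pow_ne_diagonal m (Nat.pos_of_ne_zero hne) (by omega)
      (ZMod.stdAddChar ∘ traceZeroEmbedding (ZMod n) (p - q)) ?_
    rw [← hZ, ← Units.val_pow_eq_pow_val, ← hpow, diagChar_val]
  have hkl' : k = l := Fin.ext (by omega)
  rw [hlk, pow_zero, ← AddChar.map_zero_eq_one (diagChar n)] at hpow
  rw [sub_eq_zero.mp (diagChar_injective hpow), hkl']

lemma normalForm_mul_diagChar (hZ : (Z : Matrix (Fin 3) (Fin 3) ℂ) = Zmatrix m)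
    (x : (ZMod n × ZMod n) × Fin 3) (q : ZMod n × ZMod n) :
    normalForm n Z x * diagChar n q = normalForm n Z (x.1 + cycleCoords^[x.2] q, x.2) := by
  rw [normalForm, normalForm, mul_assoc, pow_mul_diagChar hZ, ← mul_assoc,
    ← AddChar.map_add_eq_mul]

lemma normalForm_mul_self_mem_range (hZ : (Z : Matrix (Fin 3) (Fin 3) ℂ) = Zmatrix 1) {t : ℕ}
    (ht : n = 3 * t) (x : (ZMod n × ZMod n) × Fin 3) :
    normalForm n Z x * Z ∈ Set.range (normalForm n Z) := by
  obtain ⟨p, k⟩ := x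
  fin_cases k
  · exact ⟨(p, 1), by simp [normalForm]⟩
  · exact ⟨(p, 2), by simp [normalForm, pow_succ, mul_assoc]⟩
  · refine ⟨(p + ((t : ZMod n), (t : ZMod n)), 0), ?_⟩
    simp [normalForm, mul_assoc, ← pow_succ, pow_three_eq_diagChar hZ ht, AddChar.map_add_eq_mul]

lemma diagChar_mem_closure (hL : (L : Matrix (Fin 3) (Fin 3) ℂ) = Lmatrix n)
    (hZ : (Z : Matrix (Fin 3) (Fin 3) ℂ) = Zmatrix m) (p : ZMod n × ZMod n) :
    diagChar n p ∈ Subgroup.closure {L, Z} := by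
  have hL' : diagChar n (0, 1) ∈ Subgroup.closure {L, Z} :=
    eq_diagChar_zero_one hL ▸ Subgroup.subset_closure (by simp)
  have hZ' : Z ∈ Subgroup.closure {L, Z} := Subgroup.subset_closure (by simp)
  have h10 : diagChar n (1, 0) ∈ Subgroup.closure {L, Z} := by
    have hconj : (diagChar n (1, 0))⁻¹ = Z * diagChar n (0, 1) * Z⁻¹ := by
      rw [← AddChar.map_neg_eq_inv, eq_mul_inv_iff_mul_eq, mul_diagChar hZ]
      congr 2; simp [cycleCoords]
    rw [← inv_inv (diagChar n (1, 0)), hconj]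
    exact inv_mem (mul_mem (mul_mem hZ' hL') (inv_mem hZ'))
  have hp : p = p.1.val • (1, 0) + p.2.val • (0, 1) := by ext <;> simp
  rw [hp, AddChar.map_add_eq_mul, AddChar.map_nsmul_eq_pow, AddChar.map_nsmul_eq_pow]
  exact mul_mem (pow_mem h10 _) (pow_mem hL' _)

lemma coe_closure_eq_range_normalForm (hL : (L : Matrix (Fin 3) (Fin 3) ℂ) = Lmatrix n)
    (hZ : (Z : Matrix (Fin 3) (Fin 3) ℂ) = Zmatrix 1) {t : ℕ} (ht : n = 3 * t) :
    (Subgroup.closure {L, Z} : Set (GL (Fin 3) ℂ)) = Set.range (normalForm n Z) := by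
  refine subset_antisymm (fun g hg ↦ ?_) ?_
  · have hfin : ∀ g ∈ ({L, Z} : Set (GL (Fin 3) ℂ)), IsOfFinOrder g := by
      rintro g (rfl | rfl)
      · exact eq_diagChar_zero_one hL ▸ isOfFinOrder_diagChar _
      · exact IsOfFinOrder.of_pow (pow_three_eq_diagChar hZ ht ▸ isOfFinOrder_diagChar _)
          three_ne_zero
    -- `L` and `Z` have finite order, so it suffices to close up under right multiplication.
    rw [SetLike.mem_coe, ← Subgroup.mem_toSubmonoid,
      Subgroup.closure_toSubmonoid_of_isOfFinOrder hfin] at hg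
    induction hg using Submonoid.closure_induction_right with
    | one => exact ⟨(0, 0), by simp [normalForm]⟩
    | mul_right g _ y hy ih =>
      obtain ⟨x, rfl⟩ := ih
      rcases hy with rfl | rfl
      · rw [eq_diagChar_zero_one hL, normalForm_mul_diagChar hZ]
        exact ⟨_, rfl⟩
      · exact normalForm_mul_self_mem_range hZ ht x
  · rintro _ ⟨x, rfl⟩
    exact mul_mem (diagChar_mem_closure hL hZ x.1)
      (pow_mem (Subgroup.subset_closure (by simp)) _)

end NormalForm

/-- The group `X(n)`, generated by `L_n` and `Z₁` inside `GL(3,ℂ)`, has order `3·n²`. -/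
theorem Xn_order (n : ℕ) (hn : 0 < n) (hn3 : 3 ∣ n)
    (L Z : GL (Fin 3) ℂ)
    (hL : L.val = Lmatrix n) (hZ : Z.val = Zmatrix 1) :
    Nat.card ↥(Subgroup.closure ({L, Z} : Set (GL (Fin 3) ℂ))) = 3 * n ^ 2 := by
  obtain ⟨t, ht⟩ := hn3
  have : NeZero n := ⟨hn.ne'⟩
  calc Nat.card ↥(Subgroup.closure ({L, Z} : Set (GL (Fin 3) ℂ)))
      = Nat.card (Set.range (normalForm n Z)) := by
        rw [← coe_closure_eq_range_normalForm hL hZ ht]; rfl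
    _ = Nat.card ((ZMod n × ZMod n) × Fin 3) :=
        Nat.card_range_of_injective (normalForm_injective hZ)
    _ = 3 * n ^ 2 := by simp; ring
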